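/- arXiv:2506.20579 — 5 statements merged into one kernel-verified Lean document; each statement's English description precedes it below -/
import Mathlib

section
/- Let P_BB be a d_B×d_B real symmetric positive definite matrix, P_OO a d_O×d_O real symmetric matrix, P_OB a d_O×d_B real matrix, N an m×m real symmetric positive definite matrix, and Θ an m×d_B real matrix. Define Q = P_OB P_BB⁻¹, S = P_OO − Q P_BB Qᵀ, and P_BB' = (P_BB⁻¹ + Θᵀ N⁻¹ Θ)⁻¹. Then P_OO − P_OB Θᵀ (Θ P_BB Θᵀ + N)⁻¹ Θ P_OBᵀ = S + Q P_BB' Qᵀ. (Theorem 1, claim i, second part.) -/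
/-! Woodbury's identity gives `P_BB' = P_BB - P_BB Θᵀ (Θ P_BB Θᵀ + N)⁻¹ Θ P_BB`; conjugating by `Q`
and using `Q P_BB = P_OB` (and its transpose, by symmetry of `P_BB`) makes the `Q P_BB Qᵀ` terms
cancel, leaving `P_OO - P_OB Θᵀ (Θ P_BB Θᵀ + N)⁻¹ Θ P_OBᵀ`. -/

open Matrix

namespace Matrix

variable {n m α : Type*} [Fintype n] [Fintype m]

theorem inv_add_mul_inv_mul_inv_eq_sub [DecidableEq n] [DecidableEq m] [CommRing α]
    {A : Matrix n n α} {C : Matrix m m α} (U : Matrix n m α) (V : Matrix m n α) (hA : IsUnit A) (hC : IsUnit C)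
    (hVAUC : IsUnit (V * A * U + C)) :
    (A⁻¹ + U * C⁻¹ * V)⁻¹ = A - A * U * (V * A * U + C)⁻¹ * V * A := by
  have hAA : A⁻¹⁻¹ = A := nonsing_inv_nonsing_inv A ((isUnit_iff_isUnit_det A).mp hA)
  have hCC : C⁻¹⁻¹ = C := nonsing_inv_nonsing_inv C ((isUnit_iff_isUnit_det C).mp hC)
  have hunit : IsUnit (C⁻¹⁻¹ + V * A⁻¹⁻¹ * U) := by rwa [hAA, hCC, add_comm]
  rw [add_mul_mul_inv_eq_sub _ _ _ _ (isUnit_nonsing_inv_iff.mpr hA)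
    (isUnit_nonsing_inv_iff.mpr hC) hunit, hAA, hCC, add_comm C]

theorem PosDef.mul_mul_transpose_add [CommRing α] [PartialOrder α] [StarRing α] [StarOrderedRing α]
    [TrivialStar α] {A : Matrix n n α} {N : Matrix m m α} (hA : A.PosDef) (hN : N.PosDef)
    (Θ : Matrix m n α) : (Θ * A * Θᵀ + N).PosDef := by
  have hΘAΘ : (Θ * A * Θᵀ).PosSemidef := by
    simpa [conjTranspose_eq_transpose_of_trivial] using hA.posSemidef.mul_mul_conjTranspose_same Θ
  exact add_comm N _ ▸ hN.add_posSemidef hΘAΘ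

end Matrix

theorem covariance_update_offblock_general {dB dO m : ℕ}
    (PBB : Matrix (Fin dB) (Fin dB) ℝ) (POO : Matrix (Fin dO) (Fin dO) ℝ)
    (POB : Matrix (Fin dO) (Fin dB) ℝ) (N : Matrix (Fin m) (Fin m) ℝ)
    (Θ : Matrix (Fin m) (Fin dB) ℝ)
    (hPBB : PBB.PosDef) (hN : N.PosDef)
    (Q : Matrix (Fin dO) (Fin dB) ℝ) (hQ : Q = POB * PBB⁻¹)
    (S : Matrix (Fin dO) (Fin dO) ℝ) (hS : S = POO - Q * PBB * Qᵀ)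
    (PBB' : Matrix (Fin dB) (Fin dB) ℝ)
    (hPBB' : PBB' = (PBB⁻¹ + Θᵀ * N⁻¹ * Θ)⁻¹) :
    POO - POB * Θᵀ * (Θ * PBB * Θᵀ + N)⁻¹ * (Θ * POBᵀ) = S + Q * PBB' * Qᵀ := by
  set M := Θ * PBB * Θᵀ + N
  have hdet : IsUnit PBB.det := (isUnit_iff_isUnit_det PBB).mp hPBB.isUnit
  have hWoodbury : PBB' = PBB - PBB * Θᵀ * M⁻¹ * Θ * PBB := by
    rw [hPBB', inv_add_mul_inv_mul_inv_eq_sub _ _ hPBB.isUnit hN.isUnit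
      (hPBB.mul_mul_transpose_add hN Θ).isUnit]
  have hQPBB : Q * PBB = POB := by
    rw [hQ, Matrix.mul_assoc, nonsing_inv_mul _ hdet, Matrix.mul_one]
  have hPBBQ : PBB * Qᵀ = POBᵀ := by
    rw [← hQPBB, transpose_mul, (isHermitian_iff_isSymm.mp hPBB.isHermitian).eq]
  calc POO - POB * Θᵀ * M⁻¹ * (Θ * POBᵀ)
      = POO - Q * PBB * Θᵀ * M⁻¹ * (Θ * (PBB * Qᵀ)) := by rw [hQPBB, hPBBQ]
    _ = POO - Q * PBB * Qᵀ + Q * (PBB - PBB * Θᵀ * M⁻¹ * Θ * PBB) * Qᵀ := by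
      simp only [Matrix.mul_sub, Matrix.sub_mul, Matrix.mul_assoc]; abel
    _ = S + Q * PBB' * Qᵀ := by rw [hS, hWoodbury]

/-- Theorem 1, claim i, second part: with `Q = P_OB P_BB⁻¹`,
`S = P_OO − Q P_BB Qᵀ` and `P_BB' = (P_BB⁻¹ + Θᵀ N⁻¹ Θ)⁻¹`,
`P_OO − P_OB Θᵀ (Θ P_BB Θᵀ + N)⁻¹ Θ P_OBᵀ = S + Q P_BB' Qᵀ`. -/
theorem covariance_update_offblock {dB dO m : ℕ}
    (PBB : Matrix (Fin dB) (Fin dB) ℝ) (POO : Matrix (Fin dO) (Fin dO) ℝ)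
    (POB : Matrix (Fin dO) (Fin dB) ℝ) (N : Matrix (Fin m) (Fin m) ℝ)
    (Θ : Matrix (Fin m) (Fin dB) ℝ)
    (hPBB : PBB.PosDef) (hPOO : POO.IsSymm) (hN : N.PosDef)
    (Q : Matrix (Fin dO) (Fin dB) ℝ) (hQ : Q = POB * PBB⁻¹)
    (S : Matrix (Fin dO) (Fin dO) ℝ) (hS : S = POO - Q * PBB * Qᵀ)
    (PBB' : Matrix (Fin dB) (Fin dB) ℝ)
    (hPBB' : PBB' = (PBB⁻¹ + Θᵀ * N⁻¹ * Θ)⁻¹) :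
    POO - POB * Θᵀ * (Θ * PBB * Θᵀ + N)⁻¹ * (Θ * POBᵀ) = S + Q * PBB' * Qᵀ :=
  covariance_update_offblock_general PBB POO POB N Θ hPBB hN Q hQ S hS PBB' hPBB'
end

section
/- Let W and P be d×d real symmetric matrices and C a d×d real orthogonal matrix (CᵀC = C Cᵀ = I). Write the congruenced matrices in 2×2 block form: C W Cᵀ = diag(W_BB, W_OO) block diagonal with blocks of sizes d_B and d − d_B, and C P Cᵀ with blocks P_BB, P_BO, P_OB, P_OO of conforming sizes. Suppose moreover that P_OO = S + Q P' Qᵀ for some matrices S, Q and symmetric matrix P' with P_BB = P'. Then tr(W P) = tr((W_BB + Qᵀ W_OO Q) P') + tr(W_OO S). (Theorem 1, claim ii.) -/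
open Matrix

/-- Theorem 1, claim ii: if `C` is orthogonal and `C W Cᵀ` is block diagonal
`diag(W_BB, W_OO)` while `C P Cᵀ` has blocks `P_BB, P_BO, P_OB, P_OO`, and
`P_OO = S + Q P' Qᵀ` with `P_BB = P'`, then
`tr(W P) = tr((W_BB + Qᵀ W_OO Q) P') + tr(W_OO S)`. -/
theorem trace_utility_decomposition {d dB dO : ℕ}
    (W P : Matrix (Fin d) (Fin d) ℝ) (hW : W.IsSymm) (hP : P.IsSymm)
    (C : Matrix (Fin dB ⊕ Fin dO) (Fin d) ℝ)
    (hC1 : C * Cᵀ = 1) (hC2 : Cᵀ * C = 1)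
    (WBB : Matrix (Fin dB) (Fin dB) ℝ) (WOO : Matrix (Fin dO) (Fin dO) ℝ)
    (PBB : Matrix (Fin dB) (Fin dB) ℝ) (PBO : Matrix (Fin dB) (Fin dO) ℝ)
    (POB : Matrix (Fin dO) (Fin dB) ℝ) (POO : Matrix (Fin dO) (Fin dO) ℝ)
    (hWblocks : C * W * Cᵀ = Matrix.fromBlocks WBB 0 0 WOO)
    (hPblocks : C * P * Cᵀ = Matrix.fromBlocks PBB PBO POB POO)
    (S : Matrix (Fin dO) (Fin dO) ℝ) (Q : Matrix (Fin dO) (Fin dB) ℝ)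
    (P' : Matrix (Fin dB) (Fin dB) ℝ) (hP' : P'.IsSymm)
    (hPOO : POO = S + Q * P' * Qᵀ) (hPBB : PBB = P') :
    (W * P).trace = ((WBB + Qᵀ * WOO * Q) * P').trace + (WOO * S).trace := by
  have key : (W * P).trace = ((C * W * Cᵀ) * (C * P * Cᵀ)).trace := by
    have h1 : (C * W * Cᵀ) * (C * P * Cᵀ) = C * (W * P) * Cᵀ := by
      calc (C * W * Cᵀ) * (C * P * Cᵀ) = C * W * (Cᵀ * C) * P * Cᵀ := by
            simp only [Matrix.mul_assoc]
        _ = C * (W * P) * Cᵀ := by rw [hC2]; simp only [Matrix.mul_one, Matrix.mul_assoc]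
    rw [h1, Matrix.trace_mul_cycle, ← Matrix.mul_assoc, hC2, Matrix.one_mul]
  have tfb : ∀ (A : Matrix (Fin dB) (Fin dB) ℝ) (B : Matrix (Fin dB) (Fin dO) ℝ)
      (Cm : Matrix (Fin dO) (Fin dB) ℝ) (D : Matrix (Fin dO) (Fin dO) ℝ),
      (Matrix.fromBlocks A B Cm D).trace = A.trace + D.trace := by
    intro A B Cm D
    simp [Matrix.trace, Matrix.diag, Fintype.sum_sum_type, Matrix.fromBlocks]
  rw [key, hWblocks, hPblocks, Matrix.fromBlocks_multiply, tfb]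
  simp only [Matrix.zero_mul, Matrix.mul_zero, add_zero, zero_add, hPOO, hPBB,
    Matrix.mul_add, Matrix.add_mul, Matrix.trace_add]
  have h2 : (WOO * (Q * P' * Qᵀ)).trace = (Qᵀ * WOO * Q * P').trace := by
    rw [← Matrix.mul_assoc, Matrix.trace_mul_cycle]
    simp only [Matrix.mul_assoc]
  rw [h2]; ring
end

section
/- Let W and P⁺ be d×d real symmetric positive definite matrices and α > 0. Let W^{1/2} P⁺ W^{1/2} = Uᵀ D U be an eigendecomposition with U orthogonal and D = diag(σ₁², …, σ_d²) (all σᵢ² > 0). Define Φ = diag(min{α/2, σ₁²}, …, min{α/2, σ_d²}) and P* = W^{−1/2} Uᵀ Φ U W^{−1/2}. Then P* is symmetric positive definite, P⁺ − P* is positive semidefinite, and for every d×d real symmetric positive definite matrix P such that P⁺ − P is positive semidefinite, tr(W P*) − (α/2)·log det(P*) ≤ tr(W P) − (α/2)·log det(P). (Theorem 2: reverse water-filling solution of the rate-distortion problem.) -/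
/-!
Whitening by `V = U W^{1/2}` turns `tr(W P) − (α/2) log det P` into
`tr Q − (α/2) log det Q` plus a constant, where `Q = V P Vᵀ`; the constraint `P ⪯ P⁺`
becomes `Q ⪯ diag σ²` and `P*` becomes `Φ = diag φ`. Applying `log det M ≤ tr M − d` to
`M = Φ^{-1/2} Q Φ^{-1/2}` gives `log det Q ≤ ∑ᵢ (log φᵢ + Qᵢᵢ/φᵢ − 1)`, and the objective
then separates into the scalar inequalities `c (q/φ − 1) ≤ q − φ` for `q ≤ σ²`,
`φ = min c σ²`.
-/

open Matrix

open scoped ComplexOrder in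
/-- The square root of a positive semidefinite matrix, as defined in the older Mathlib
(removed since). -/
noncomputable def Matrix.PosSemidef.sqrt {n 𝕜 : Type*} [Fintype n] [DecidableEq n] [RCLike 𝕜]
    {A : Matrix n n 𝕜} (hA : A.PosSemidef) : Matrix n n 𝕜 :=
  hA.1.eigenvectorUnitary.1 * diagonal (((↑) : ℝ → 𝕜) ∘ (hA.1.eigenvalues · |>.sqrt)) *
  (star hA.1.eigenvectorUnitary : Matrix n n 𝕜)

theorem mul_div_min_sub_one_le {c σ q : ℝ} (hc : 0 < c) (hσ : 0 < σ) (hq : q ≤ σ) :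
    c * (q / min c σ - 1) ≤ q - min c σ := by
  rcases le_total c σ with h | h
  · rw [min_eq_left h, mul_sub, mul_div_cancel₀ _ hc.ne', mul_one]
  · rw [min_eq_right h]
    have : q / σ - 1 ≤ 0 := by rwa [sub_nonpos, div_le_one hσ]
    calc c * (q / σ - 1) ≤ σ * (q / σ - 1) := mul_le_mul_of_nonpos_right h this
      _ = q - σ := by field_simp

namespace Matrix

section Sqrt

open scoped ComplexOrder MatrixOrder

variable {n 𝕜 : Type*} [Fintype n] [DecidableEq n] [RCLike 𝕜] {A : Matrix n n 𝕜}

theorem PosSemidef.sqrt_eq_cfcSqrt (hA : A.PosSemidef) : hA.sqrt = CFC.sqrt A := by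
  rw [CFC.sqrt_eq_cfc, cfc_nnreal_eq_real _ A hA.nonneg, hA.1.cfc_eq]
  simp [IsHermitian.cfc, PosSemidef.sqrt, Function.comp_def,
    max_eq_left (hA.eigenvalues_nonneg _)]

theorem PosSemidef.sqrt_mul_sqrt (hA : A.PosSemidef) : hA.sqrt * hA.sqrt = A := by
  rw [hA.sqrt_eq_cfcSqrt, CFC.sqrt_mul_sqrt_self A hA.nonneg]

theorem PosSemidef.posSemidef_sqrt (hA : A.PosSemidef) : hA.sqrt.PosSemidef := by
  rw [hA.sqrt_eq_cfcSqrt]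
  exact (CFC.sqrt_nonneg A).posSemidef

theorem PosDef.isUnit_sqrt (hA : A.PosDef) : IsUnit hA.posSemidef.sqrt :=
  isUnit_of_mul_isUnit_left (hA.posSemidef.sqrt_mul_sqrt ▸ hA.isUnit)

end Sqrt

variable {n : Type*} [Fintype n] [DecidableEq n]

theorem PosDef.log_det_le_trace_sub_card {M : Matrix n n ℝ} (hM : M.PosDef) :
    Real.log M.det ≤ M.trace - Fintype.card n := by
  have hpos := hM.eigenvalues_pos
  rw [hM.isHermitian.det_eq_prod_eigenvalues, hM.isHermitian.trace_eq_sum_eigenvalues]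
  simp only [RCLike.ofReal_real_eq_id, id]
  rw [Real.log_prod fun i _ => (hpos i).ne']
  calc ∑ i, Real.log (hM.1.eigenvalues i) ≤ ∑ i, (hM.1.eigenvalues i - 1) :=
        Finset.sum_le_sum fun i _ => Real.log_le_sub_one_of_pos (hpos i)
    _ = _ := by simp [Finset.sum_sub_distrib]

theorem PosDef.log_det_le_sum_log_add_div {Q : Matrix n n ℝ} (hQ : Q.PosDef) {φ : n → ℝ}
    (hφ : ∀ i, 0 < φ i) :
    Real.log Q.det ≤ ∑ i, (Real.log (φ i) + Q i i / φ i - 1) := by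
  set a : n → ℝ := fun i => (√(φ i))⁻¹
  have ha : ∀ i, a i * a i = (φ i)⁻¹ := fun i => by
    rw [← mul_inv, Real.mul_self_sqrt (hφ i).le]
  have hM : (diagonal a * Q * diagonal a).PosDef := by
    have hunit : IsUnit (diagonal a) := isUnit_diagonal.2 <|
      Pi.isUnit_iff.2 fun i => (inv_pos.2 (Real.sqrt_pos.2 (hφ i))).ne'.isUnit
    have := (hunit.posDef_star_left_conjugate_iff (x := Q)).2 hQ
    rwa [star_eq_conjTranspose, diagonal_conjTranspose, star_trivial] at this
  have hdet : (diagonal a * Q * diagonal a).det = Q.det * ∏ i, (φ i)⁻¹ := by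
    simp only [det_mul, det_diagonal, ← ha, Finset.prod_mul_distrib]
    ring
  have htrace : (diagonal a * Q * diagonal a).trace = ∑ i, Q i i / φ i := by
    refine Finset.sum_congr rfl fun i _ => ?_
    simp only [diag_apply, mul_diagonal, diagonal_mul, div_eq_mul_inv, ← ha]
    ring
  have hφinv : ∀ i, (φ i)⁻¹ ≠ 0 := fun i => (inv_pos.2 (hφ i)).ne'
  have key := hM.log_det_le_trace_sub_card
  rw [hdet, htrace, Real.log_mul hQ.det_pos.ne' (Finset.prod_ne_zero_iff.2 fun i _ => hφinv i),
    Real.log_prod fun i _ => hφinv i] at key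
  simp only [Real.log_inv, Finset.sum_neg_distrib] at key
  simp only [Finset.sum_sub_distrib, Finset.sum_add_distrib, Finset.sum_const, Finset.card_univ,
    nsmul_eq_mul, mul_one]
  linarith

theorem trace_mul_sub_mul_log_det_eq {V W P : Matrix n n ℝ} (hVW : Vᵀ * V = W)
    (hW : 0 < W.det) (hP : 0 < P.det) (c : ℝ) :
    (W * P).trace - c * Real.log P.det =
      (V * P * Vᵀ).trace - c * Real.log (V * P * Vᵀ).det + c * Real.log W.det := by
  have htrace : (V * P * Vᵀ).trace = (W * P).trace := by
    rw [trace_mul_cycle, ← hVW]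
  have hdet : (V * P * Vᵀ).det = P.det * W.det := by
    rw [← hVW, det_mul, det_mul, det_mul, det_transpose]
    ring
  rw [htrace, hdet, Real.log_mul hP.ne' hW.ne']
  ring

theorem trace_sub_mul_log_det_diagonal_min_le {c : ℝ} (hc : 0 < c) {σ : n → ℝ}
    (hσ : ∀ i, 0 < σ i) {Q : Matrix n n ℝ} (hQ : Q.PosDef) (hQσ : ∀ i, Q i i ≤ σ i) :
    (diagonal fun i => min c (σ i)).trace - c * Real.log (diagonal fun i => min c (σ i)).det ≤
      Q.trace - c * Real.log Q.det := by
  have hφ : ∀ i, 0 < min c (σ i) := fun i => lt_min hc (hσ i)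
  rw [trace_diagonal, det_diagonal, Real.log_prod fun i _ => (hφ i).ne', Finset.mul_sum,
    ← Finset.sum_sub_distrib]
  calc ∑ i, (min c (σ i) - c * Real.log (min c (σ i)))
      ≤ ∑ i, (Q i i - c * (Real.log (min c (σ i)) + Q i i / min c (σ i) - 1)) :=
        Finset.sum_le_sum fun i _ => by
          linarith [mul_div_min_sub_one_le hc (hσ i) (hQσ i)]
    _ = Q.trace - c * ∑ i, (Real.log (min c (σ i)) + Q i i / min c (σ i) - 1) := by
        rw [Finset.sum_sub_distrib, Finset.mul_sum]
        rfl
    _ ≤ Q.trace - c * Real.log Q.det := by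
        gcongr
        exact hQ.log_det_le_sum_log_add_div hφ

theorem reverse_water_filling_of_congr {V W Pplus Pstar : Matrix n n ℝ} (hV : IsUnit V)
    (hVW : Vᵀ * V = W) {c : ℝ} (hc : 0 < c) {σ : n → ℝ} (hσ : ∀ i, 0 < σ i)
    (hPplus : V * Pplus * Vᵀ = diagonal σ)
    (hPstar : V * Pstar * Vᵀ = diagonal fun i => min c (σ i)) :
    Pstar.PosDef ∧ (Pplus - Pstar).PosSemidef ∧
      ∀ P : Matrix n n ℝ, P.PosDef → (Pplus - P).PosSemidef →
        (W * Pstar).trace - c * Real.log Pstar.det ≤ (W * P).trace - c * Real.log P.det := by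
  have hstar : star V = Vᵀ := by rw [star_eq_conjTranspose, conjTranspose_eq_transpose_of_trivial]
  have hW : 0 < W.det := by
    rw [← hVW, det_mul, det_transpose]
    exact mul_self_pos.2 ((isUnit_iff_isUnit_det V).1 hV).ne_zero
  have hPstar_pos : Pstar.PosDef := by
    rw [← hV.posDef_star_right_conjugate_iff, hstar, hPstar]
    exact posDef_diagonal_iff.2 fun i => lt_min hc (hσ i)
  refine ⟨hPstar_pos, ?_, fun P hP hPle => ?_⟩
  · rw [← hV.posSemidef_star_right_conjugate_iff, hstar, Matrix.mul_sub, Matrix.sub_mul, hPplus,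
      hPstar, diagonal_sub]
    exact posSemidef_diagonal_iff.2 fun i => sub_nonneg.2 (min_le_right _ _)
  have hQ : (V * P * Vᵀ).PosDef := by
    rwa [← hstar, hV.posDef_star_right_conjugate_iff]
  have hQσ : ∀ i, (V * P * Vᵀ) i i ≤ σ i := fun i => by
    have := (hV.posSemidef_star_right_conjugate_iff.2 hPle).diag_nonneg (i := i)
    rwa [hstar, Matrix.mul_sub, Matrix.sub_mul, hPplus, Matrix.sub_apply, diagonal_apply_eq,
      sub_nonneg] at this
  rw [trace_mul_sub_mul_log_det_eq hVW hW hPstar_pos.det_pos,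
    trace_mul_sub_mul_log_det_eq hVW hW hP.det_pos, hPstar]
  exact add_le_add_left (trace_sub_mul_log_det_diagonal_min_le hc hσ hQ hQσ) _

end Matrix

theorem reverse_water_filling_general {d : ℕ}
    (W Pplus : Matrix (Fin d) (Fin d) ℝ) (hW : W.PosDef)
    (α : ℝ) (hα : 0 < α)
    (U : Matrix (Fin d) (Fin d) ℝ) (hU : U * Uᵀ = 1) (hU' : Uᵀ * U = 1)
    (σsq : Fin d → ℝ) (hσ : ∀ i, 0 < σsq i)
    (hdecomp : hW.posSemidef.sqrt * Pplus * hW.posSemidef.sqrt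
        = Uᵀ * Matrix.diagonal σsq * U)
    (Pstar : Matrix (Fin d) (Fin d) ℝ)
    (hPstar : Pstar = (hW.posSemidef.sqrt)⁻¹ * Uᵀ *
        Matrix.diagonal (fun i => min (α / 2) (σsq i)) * U *
        (hW.posSemidef.sqrt)⁻¹) :
    Pstar.PosDef ∧ (Pplus - Pstar).PosSemidef ∧
      ∀ P : Matrix (Fin d) (Fin d) ℝ, P.PosDef → (Pplus - P).PosSemidef →
        (W * Pstar).trace - (α / 2) * Real.log Pstar.det ≤
          (W * P).trace - (α / 2) * Real.log P.det := by
  set S := hW.posSemidef.sqrt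
  set φ := fun i => min (α / 2) (σsq i)
  have hSt : Sᵀ = S := hW.posSemidef.posSemidef_sqrt.isHermitian
  have hS : IsUnit S.det := (isUnit_iff_isUnit_det S).1 hW.isUnit_sqrt
  refine reverse_water_filling_of_congr (V := U * S) ?_ ?_ (half_pos hα) hσ ?_ ?_
  · rw [isUnit_iff_isUnit_det, det_mul]
    exact (isUnit_det_of_right_inverse hU).mul hS
  · rw [transpose_mul, hSt, Matrix.mul_assoc, ← Matrix.mul_assoc Uᵀ, hU', Matrix.one_mul,
      hW.posSemidef.sqrt_mul_sqrt]
  · calc U * S * Pplus * (U * S)ᵀ = U * (S * Pplus * S) * Uᵀ := by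
          simp only [transpose_mul, hSt, Matrix.mul_assoc]
      _ = (U * Uᵀ) * diagonal σsq * (U * Uᵀ) := by
          rw [hdecomp]
          simp only [Matrix.mul_assoc]
      _ = diagonal σsq := by rw [hU, Matrix.one_mul, Matrix.mul_one]
  · calc U * S * Pstar * (U * S)ᵀ
          = (U * (S * S⁻¹) * Uᵀ) * diagonal φ * (U * (S⁻¹ * S) * Uᵀ) := by
          simp only [hPstar, transpose_mul, hSt, Matrix.mul_assoc]
      _ = _ := by
          rw [mul_nonsing_inv S hS, nonsing_inv_mul S hS, Matrix.mul_one, hU,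
            Matrix.one_mul, Matrix.mul_one]

/-- Theorem 2 (reverse water-filling): with `W^{1/2} P⁺ W^{1/2} = Uᵀ D U`,
`D = diag(σᵢ²)`, `Φ = diag(min{α/2, σᵢ²})` and
`P* = W^{−1/2} Uᵀ Φ U W^{−1/2}`, the matrix `P*` is symmetric positive
definite, satisfies `P* ⪯ P⁺`, and minimizes
`tr(W P) − (α/2) log det P` over all symmetric positive definite `P ⪯ P⁺`. -/
theorem reverse_water_filling {d : ℕ}
    (W Pplus : Matrix (Fin d) (Fin d) ℝ) (hW : W.PosDef) (hPplus : Pplus.PosDef)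
    (α : ℝ) (hα : 0 < α)
    (U : Matrix (Fin d) (Fin d) ℝ) (hU : U * Uᵀ = 1) (hU' : Uᵀ * U = 1)
    (σsq : Fin d → ℝ) (hσ : ∀ i, 0 < σsq i)
    (hdecomp : hW.posSemidef.sqrt * Pplus * hW.posSemidef.sqrt
        = Uᵀ * Matrix.diagonal σsq * U)
    (Pstar : Matrix (Fin d) (Fin d) ℝ)
    (hPstar : Pstar = (hW.posSemidef.sqrt)⁻¹ * Uᵀ *
        Matrix.diagonal (fun i => min (α / 2) (σsq i)) * U *
        (hW.posSemidef.sqrt)⁻¹) :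
    Pstar.PosDef ∧ (Pplus - Pstar).PosSemidef ∧
      ∀ P : Matrix (Fin d) (Fin d) ℝ, P.PosDef → (Pplus - P).PosSemidef →
        (W * Pstar).trace - (α / 2) * Real.log Pstar.det ≤
          (W * P).trace - (α / 2) * Real.log P.det :=
  reverse_water_filling_general W Pplus hW α hα U hU hU' σsq hσ hdecomp Pstar hPstar
end

section
/- Let D = diag(σ₁², …, σ_d²) with all σᵢ² > 0 and let α > 0. Define Q* = diag(min{α/2, σ₁²}, …, min{α/2, σ_d²}). Then Q* is positive definite, D − Q* is positive semidefinite, and for every d×d real symmetric positive definite matrix Q with D − Q positive semidefinite, tr(Q*) − (α/2)·log det(Q*) ≤ tr(Q) − (α/2)·log det(Q). (Diagonalized reduced problem in the proof of Theorem 2.) -/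
/-!
Write `m i = min (α / 2) (σsq i)` for the diagonal of `Q*`. Rescaling `Q` to `S Q S` with
`S = diag (m i ^ (-1/2))` and applying `log λ ≤ λ - 1` to its eigenvalues gives
`log det Q ≤ ∑ i, (log (m i) + Q i i / m i - 1)`, which bounds the objective at `Q` below by a
sum of one-variable terms. Since `Q ⪯ D` forces `Q i i ≤ σsq i`, each term is at least
`m i - (α / 2) log (m i)`: for `α / 2 ≤ σsq i` this is an equality, otherwise
`m i = σsq i` and the slope `α / 2 / σsq i ≥ 1` works in our favour.
-/

open Matrix

namespace Matrix.PosDef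

variable {n : Type*} [Fintype n] [DecidableEq n] {Q : Matrix n n ℝ}

theorem log_det_le_trace_sub_card_s8 (hQ : Q.PosDef) :
    Real.log Q.det ≤ Q.trace - Fintype.card n := by
  have hev := hQ.eigenvalues_pos
  rw [hQ.1.det_eq_prod_eigenvalues, hQ.1.trace_eq_sum_eigenvalues]
  simp only [RCLike.ofReal_real_eq_id, id]
  rw [Real.log_prod fun i _ => (hev i).ne', Fintype.card_eq_sum_ones, Nat.cast_sum,
    Nat.cast_one, ← Finset.sum_sub_distrib]
  exact Finset.sum_le_sum fun i _ => Real.log_le_sub_one_of_pos (hev i)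

theorem log_det_le_sum_log_add_div_sub_one (hQ : Q.PosDef) {m : n → ℝ} (hm : ∀ i, 0 < m i) :
    Real.log Q.det ≤ ∑ i, (Real.log (m i) + Q i i / m i - 1) := by
  set s : n → ℝ := fun i => (Real.sqrt (m i))⁻¹
  have hs : ∀ i, s i * s i = (m i)⁻¹ := fun i => by
    rw [← mul_inv, Real.mul_self_sqrt (hm i).le]
  have hsM : (diagonal s * Q * diagonal s).PosDef := by
    simpa using hQ.conjTranspose_mul_mul_same <| mulVec_injective_iff_isUnit.mpr <|
      isUnit_diagonal.mpr <| Pi.isUnit_iff.mpr fun i =>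
        (inv_pos.mpr (Real.sqrt_pos.mpr (hm i))).ne'.isUnit
  have hdet : (diagonal s * Q * diagonal s).det = Q.det * ∏ i, (m i)⁻¹ := by
    simp_rw [det_mul, det_diagonal, ← hs, Finset.prod_mul_distrib]
    ring
  have htr : (diagonal s * Q * diagonal s).trace = ∑ i, Q i i / m i := by
    simp_rw [trace, diag_apply, mul_diagonal, diagonal_mul, div_eq_mul_inv, ← hs]
    exact Finset.sum_congr rfl fun i _ => by ring
  have hM := hsM.log_det_le_trace_sub_card_s8
  rw [hdet, htr, Real.log_mul hQ.det_pos.ne' (Finset.prod_ne_zero_iff.mpr fun i _ =>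
    (inv_pos.2 (hm i)).ne'), Real.log_prod fun i _ => (inv_pos.2 (hm i)).ne'] at hM
  simp only [Real.log_inv, Finset.sum_neg_distrib] at hM
  simp only [Finset.sum_sub_distrib, Finset.sum_add_distrib, Finset.sum_const, Finset.card_univ,
    nsmul_eq_mul, mul_one]
  linarith

end Matrix.PosDef

theorem mul_div_min_sub_one_le_sub_min {c q σ : ℝ} (hc : c ≠ 0) (hσ : 0 < σ)
    (hqσ : q ≤ σ) :
    c * (q / min c σ - 1) ≤ q - min c σ := by
  rcases le_total c σ with h | h
  · rw [min_eq_left h, mul_sub, mul_div_cancel₀ q hc, mul_one]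
  · rw [min_eq_right h]
    have hgap : q - σ - c * (q / σ - 1) = (σ - q) * (c - σ) / σ := by field_simp; ring
    have : 0 ≤ (σ - q) * (c - σ) / σ :=
      div_nonneg (mul_nonneg (by linarith) (by linarith)) hσ.le
    linarith

/-- Diagonalized reduced problem in the proof of Theorem 2: with
`D = diag(σᵢ²)` and `Q* = diag(min{α/2, σᵢ²})`, the matrix `Q*` is positive
definite, `Q* ⪯ D`, and `Q*` minimizes `tr(Q) − (α/2) log det Q` over all
symmetric positive definite `Q ⪯ D`. -/
theorem diagonal_reduced_problem {d : ℕ}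
    (σsq : Fin d → ℝ) (hσ : ∀ i, 0 < σsq i) (α : ℝ) (hα : 0 < α)
    (Qstar : Matrix (Fin d) (Fin d) ℝ)
    (hQstar : Qstar = Matrix.diagonal (fun i => min (α / 2) (σsq i))) :
    Qstar.PosDef ∧ (Matrix.diagonal σsq - Qstar).PosSemidef ∧
      ∀ Q : Matrix (Fin d) (Fin d) ℝ, Q.PosDef →
        (Matrix.diagonal σsq - Q).PosSemidef →
        Qstar.trace - (α / 2) * Real.log Qstar.det ≤
          Q.trace - (α / 2) * Real.log Q.det := by
  subst hQstar
  set m : Fin d → ℝ := fun i => min (α / 2) (σsq i)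
  have hc : 0 < α / 2 := half_pos hα
  have hm : ∀ i, 0 < m i := fun i => lt_min hc (hσ i)
  refine ⟨posDef_diagonal_iff.mpr hm, ?_, fun Q hQ hQD => ?_⟩
  · rw [diagonal_sub]
    exact PosSemidef.diagonal fun i => sub_nonneg.mpr (min_le_right _ _)
  have hQ_le : ∀ i, Q i i ≤ σsq i := fun i => by
    simpa using hQD.diag_nonneg (i := i)
  rw [trace_diagonal, det_diagonal, Real.log_prod fun i _ => (hm i).ne']
  calc ∑ i, m i - α / 2 * ∑ i, Real.log (m i)
      = ∑ i, (m i - α / 2 * Real.log (m i)) := by rw [Finset.sum_sub_distrib, Finset.mul_sum]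
    _ ≤ ∑ i, (Q i i - α / 2 * (Real.log (m i) + Q i i / m i - 1)) :=
        Finset.sum_le_sum fun i _ => by
          linarith [mul_div_min_sub_one_le_sub_min hc.ne' (hσ i) (hQ_le i)]
    _ = Q.trace - α / 2 * ∑ i, (Real.log (m i) + Q i i / m i - 1) := by
        rw [Finset.sum_sub_distrib, Finset.mul_sum]; rfl
    _ ≤ Q.trace - α / 2 * Real.log Q.det := by
        gcongr; exact hQ.log_det_le_sum_log_add_div_sub_one hm
end

section
/- Let P⁺ be a d×d real symmetric positive definite matrix and P a d×d real symmetric positive definite matrix with P⁺ − P positive semidefinite. Then P⁻¹ − (P⁺)⁻¹ is positive semidefinite, and there exist an integer r with 0 ≤ r ≤ d, a real r×d matrix Θ of rank r, and an r×r diagonal matrix N with strictly positive diagonal entries (with the convention that r = 0 gives Θᵀ N⁻¹ Θ = 0), such that P = ((P⁺)⁻¹ + Θᵀ N⁻¹ Θ)⁻¹. (Equivalence of the non-convex compression design problem and its convex relaxation.) -/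
/-!
Both parts come from the block matrix `[[P⁺, I], [I, P⁻¹]]`: its two Schur complements are
`P⁺ - P` and `P⁻¹ - (P⁺)⁻¹`, so one is positive semidefinite iff the block matrix is, iff the other
is. The gap `P⁻¹ - (P⁺)⁻¹ ⪰ 0` then factors as `Θᵀ Θ`, where the rows of `Θ` are `√λ uᵀ` for the
eigenpairs `(λ, u)` with `λ ≠ 0`; this `Θ` has full row rank, and `N = I` works.
-/

open Matrix

namespace Matrix

variable {m n : Type*} [Fintype m]

theorem conjTranspose_mul_self_submatrix_of_row_eq_zero {α : Type*}
    [NonUnitalNonAssocSemiring α] [StarRing α] {A : Matrix m n α} {p : m → Prop}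
    [DecidablePred p] (h : ∀ i, ¬ p i → A i = 0) :
    (A.submatrix ((↑) : Subtype p → m) id)ᴴ * A.submatrix ((↑) : Subtype p → m) id =
      Aᴴ * A := by
  ext j k
  simp only [Matrix.mul_apply, conjTranspose_apply, submatrix_apply, id]
  rw [← Fintype.sum_subtype_add_sum_subtype p,
    Fintype.sum_eq_zero (fun i : {i // ¬ p i} ↦ star (A i j) * A i k) fun i ↦ by simp [h i i.2],
    add_zero]

variable [Fintype n] [DecidableEq n]

section
variable {K : Type*} [Field K] [PartialOrder K] [StarRing K] [StarOrderedRing K]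

theorem PosDef.posSemidef_inv_sub_inv {A B : Matrix n n K} (hA : A.PosDef) (hB : B.PosDef)
    (hAB : (A - B).PosSemidef) : (B⁻¹ - A⁻¹).PosSemidef := by
  let _ := hA.isUnit.invertible
  let _ := hB.isUnit.invertible
  let _ := hB.inv.isUnit.invertible
  have hblock : (fromBlocks A 1 1ᴴ B⁻¹).PosSemidef := by
    rwa [PosDef.fromBlocks₂₂ A 1 hB.inv, inv_inv_of_invertible, conjTranspose_one, mul_one,
      one_mul]
  rwa [PosDef.fromBlocks₁₁ 1 B⁻¹ hA, conjTranspose_one, mul_one, one_mul] at hblock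

end

variable {𝕜 : Type*} [RCLike 𝕜]

open scoped ComplexOrder in
theorem PosSemidef.exists_fin_rank_conjTranspose_mul_self_eq {A : Matrix n n 𝕜}
    (hA : A.PosSemidef) : ∃ B : Matrix (Fin A.rank) n 𝕜, B.rank = A.rank ∧ Bᴴ * B = A := by
  classical
  set U : Matrix n n 𝕜 := (hA.1.eigenvectorUnitary : Matrix n n 𝕜)
  set ev := hA.1.eigenvalues
  set C : Matrix n n 𝕜 := diagonal (fun i ↦ (√(ev i) : 𝕜)) * Uᴴ
  have hC : Cᴴ * C = A := by
    have hsqrt : ∀ i, star (√(ev i) : 𝕜) * √(ev i) = ev i := fun i ↦ by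
      rw [RCLike.star_def, RCLike.conj_ofReal, ← RCLike.ofReal_mul,
        Real.mul_self_sqrt (hA.eigenvalues_nonneg i)]
    conv_rhs => rw [hA.1.spectral_theorem, Unitary.conjStarAlgAut_apply]
    simp only [C, conjTranspose_mul, conjTranspose_conjTranspose, diagonal_conjTranspose,
      Matrix.mul_assoc, ← Matrix.mul_assoc (diagonal _), diagonal_mul_diagonal, Pi.star_apply,
      hsqrt]
    rfl
  have hC_row : ∀ i, ¬ ev i ≠ 0 → C i = 0 := by
    intro i hi
    ext j
    simp [C, not_not.mp hi]
  let e : Fin A.rank ≃ {i // ev i ≠ 0} :=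
    (Fintype.equivFinOfCardEq hA.1.rank_eq_card_non_zero_eigs.symm).symm
  set B := (C.submatrix (↑) id).submatrix e id
  have hB : Bᴴ * B = A := by
    rw [conjTranspose_submatrix, submatrix_mul_equiv,
      conjTranspose_mul_self_submatrix_of_row_eq_zero hC_row, submatrix_id_id, hC]
  exact ⟨B, by rw [← rank_conjTranspose_mul_self, hB], hB⟩

end Matrix

/-- Equivalence of the non-convex compression design problem and its convex
relaxation: if `0 ≺ P ⪯ P⁺` then `P⁻¹ − (P⁺)⁻¹ ⪰ 0` and there exist
`0 ≤ r ≤ d`, a full-row-rank `r×d` matrix `Θ` and a diagonal `N ≻ 0` with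
`P = ((P⁺)⁻¹ + Θᵀ N⁻¹ Θ)⁻¹` (for `r = 0` the term `Θᵀ N⁻¹ Θ` is zero). -/
theorem convex_relaxation_equivalence {d : ℕ}
    (Pplus P : Matrix (Fin d) (Fin d) ℝ)
    (hPplus : Pplus.PosDef) (hP : P.PosDef) (hle : (Pplus - P).PosSemidef) :
    (P⁻¹ - Pplus⁻¹).PosSemidef ∧
      ∃ (r : ℕ) (_ : r ≤ d) (Θ : Matrix (Fin r) (Fin d) ℝ) (N : Fin r → ℝ),
        Θ.rank = r ∧ (∀ i, 0 < N i) ∧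
          P = (Pplus⁻¹ + Θᵀ * (Matrix.diagonal N)⁻¹ * Θ)⁻¹ := by
  have hgap := hPplus.posSemidef_inv_sub_inv hP hle
  obtain ⟨Θ, hrank, hΘ⟩ := hgap.exists_fin_rank_conjTranspose_mul_self_eq
  refine ⟨hgap, _, rank_le_width _, Θ, fun _ ↦ 1, hrank, fun _ ↦ one_pos, ?_⟩
  let _ := hP.isUnit.invertible
  rw [diagonal_one, inv_one, Matrix.mul_one, ← conjTranspose_eq_transpose_of_trivial, hΘ,
    add_sub_cancel, inv_inv_of_invertible]
end
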